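/- arXiv:1905.12009 — 7 statements merged into one kernel-verified Lean document; each statement's English description precedes it below -/
import Mathlib

section
/- Suppose the neighborhood operator N is nonexpansive in the supremum norm, i.e., ‖N q₁ − N q₂‖∞ ≤ ‖q₁ − q₂‖∞ for all Q-functions q₁, q₂. Then the operator T is a γ-contraction in the supremum norm: for all Q-functions q₁, q₂, ‖T q₁ − T q₂‖∞ ≤ γ · ‖q₁ − q₂‖∞. -/
/-!
The maximum over a finite set is 1-Lipschitz for the sup norm, so the value functions
`y ↦ max_D (N q) (y, D)` of `q₁` and `q₂` differ by at most `‖N q₁ - N q₂‖ ≤ ‖q₁ - q₂‖`.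
In `T q₁ - T q₂` the rewards cancel, leaving `γ` times an average of these differences
against the probability vector `P x (C x) ·`, which is at most `γ ‖q₁ - q₂‖`.
-/

open Finset

namespace Finset

variable {ι α : Type*} [AddCommGroup α] [LinearOrder α] [IsOrderedAddMonoid α]
  {s : Finset ι} {f g : ι → α} {c : α}

lemma sup'_sub_sup'_le (hs : s.Nonempty) (h : ∀ i ∈ s, f i - g i ≤ c) :
    s.sup' hs f - s.sup' hs g ≤ c :=
  sub_le_iff_le_add'.2 <| sup'_le hs f fun i hi =>
    (sub_le_iff_le_add'.1 (h i hi)).trans (add_le_add_left (le_sup' g hi) c)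

lemma abs_sup'_sub_sup'_le (hs : s.Nonempty) (h : ∀ i ∈ s, |f i - g i| ≤ c) :
    |s.sup' hs f - s.sup' hs g| ≤ c :=
  abs_sub_le_iff.2 ⟨sup'_sub_sup'_le hs fun i hi => (abs_sub_le_iff.1 (h i hi)).1,
    sup'_sub_sup'_le hs fun i hi => (abs_sub_le_iff.1 (h i hi)).2⟩

lemma abs_sum_mul_le_of_abs_le {w f : ι → ℝ} {c : ℝ} (hw0 : ∀ i ∈ s, 0 ≤ w i)
    (hw1 : ∑ i ∈ s, w i = 1) (hf : ∀ i ∈ s, |f i| ≤ c) :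
    |∑ i ∈ s, w i * f i| ≤ c :=
  calc |∑ i ∈ s, w i * f i| ≤ ∑ i ∈ s, |w i * f i| := abs_sum_le_sum_abs _ _
    _ ≤ ∑ i ∈ s, w i * c := sum_le_sum fun i hi => by
        rw [abs_mul, abs_of_nonneg (hw0 i hi)]
        exact mul_le_mul_of_nonneg_left (hf i hi) (hw0 i hi)
    _ = c := by rw [← sum_mul, hw1, one_mul]

end Finset

theorem stmt0_general {X A : Type*} [Fintype X]
    (F : Set (X → A)) [Fintype F] [Nonempty F]
    (P : X → A → X → ℝ) (hP0 : ∀ x a y, 0 ≤ P x a y) (hP1 : ∀ x a, ∑ y, P x a y = 1)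
    (r : X → A → X → ℝ) (γ : ℝ) (hγ0 : 0 < γ)
    (N : (X × F → ℝ) → (X × F → ℝ))
    (hN : ∀ q₁ q₂ : X × F → ℝ, ‖N q₁ - N q₂‖ ≤ ‖q₁ - q₂‖)
    (T : (X × F → ℝ) → (X × F → ℝ))
    (hT : ∀ (q : X × F → ℝ) (x : X) (C : F), T q (x, C) =
      ∑ y, P x (C.1 x) y *
        (r x (C.1 x) y + γ * (univ.sup' univ_nonempty fun D : F => N q (y, D)))) :
    ∀ q₁ q₂ : X × F → ℝ, ‖T q₁ - T q₂‖ ≤ γ * ‖q₁ - q₂‖ := by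
  intro q₁ q₂
  set V : (X × F → ℝ) → X → ℝ := fun q y => univ.sup' univ_nonempty fun D : F => N q (y, D)
  have hV : ∀ y, |V q₁ y - V q₂ y| ≤ ‖q₁ - q₂‖ := fun y =>
    (abs_sup'_sub_sup'_le univ_nonempty fun D _ => by
      simpa using norm_le_pi_norm (N q₁ - N q₂) (y, D)).trans (hN q₁ q₂)
  refine (pi_norm_le_iff_of_nonneg (mul_nonneg hγ0.le (norm_nonneg _))).2 fun ⟨x, C⟩ => ?_
  have hdiff : (T q₁ - T q₂) (x, C) = ∑ y, P x (C.1 x) y * (γ * (V q₁ y - V q₂ y)) := by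
    simp only [Pi.sub_apply, hT, ← sum_sub_distrib]
    congr 1; funext y; ring
  rw [Real.norm_eq_abs, hdiff]
  refine abs_sum_mul_le_of_abs_le (fun y _ => hP0 _ _ _) (hP1 _ _) fun y _ => ?_
  rw [abs_mul, abs_of_pos hγ0]
  exact mul_le_mul_of_nonneg_left (hV y) hγ0.le

/-- If the neighborhood operator `N` is nonexpansive in the sup norm, then the
operator `T` defined by `(T q)(x,C) = Σ_y P x (C x) y * (r x (C x) y + γ * max_D (N q)(y,D))`
is a `γ`-contraction in the sup norm. -/
theorem stmt0 {X A : Type*} [Fintype X] [Nonempty X] [Fintype A] [Nonempty A]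
    (F : Set (X → A)) [Fintype F] [Nonempty F]
    (P : X → A → X → ℝ) (hP0 : ∀ x a y, 0 ≤ P x a y) (hP1 : ∀ x a, ∑ y, P x a y = 1)
    (r : X → A → X → ℝ) (γ : ℝ) (hγ0 : 0 < γ) (hγ1 : γ < 1)
    (N : (X × F → ℝ) → (X × F → ℝ))
    (hN : ∀ q₁ q₂ : X × F → ℝ, ‖N q₁ - N q₂‖ ≤ ‖q₁ - q₂‖)
    (T : (X × F → ℝ) → (X × F → ℝ))
    (hT : ∀ (q : X × F → ℝ) (x : X) (C : F), T q (x, C) =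
      ∑ y, P x (C.1 x) y *
        (r x (C.1 x) y + γ * (univ.sup' univ_nonempty fun D : F => N q (y, D)))) :
    ∀ q₁ q₂ : X × F → ℝ, ‖T q₁ - T q₂‖ ≤ γ * ‖q₁ - q₂‖ :=
  stmt0_general F P hP0 hP1 r γ hγ0 N hN T hT
end

section
/- Suppose the neighborhood operator N is nonexpansive in the supremum norm, i.e., ‖N q₁ − N q₂‖∞ ≤ ‖q₁ − q₂‖∞ for all Q-functions q₁, q₂. Then there exists a unique Q-function q* satisfying the fixed-point equation q*(x,C) = Σ_{y∈X} P x (C x) y · ( r x (C x) y + γ · max_{D∈F} (N q*)(y,D) ) for all x ∈ X and C ∈ F; that is, T has a unique fixed point. -/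
/-!
`T` factors as `B ∘ N`, where `B` is the Bellman backup taking the best continuation value over
the policies. A maximum over finitely many indices is 1-Lipschitz in the sup norm, and averaging
against a probability vector is too, so `B` is a `γ`-contraction. Composed with the nonexpansive
`N`, `T` is a `γ`-contraction of the complete space of Q-functions, and Banach's fixed point
theorem gives the unique fixed point.
-/

open Finset

theorem Finset.abs_sup'_sub_sup'_le_s4 {ι α : Type*} [AddCommGroup α] [LinearOrder α]
    [IsOrderedAddMonoid α] {s : Finset ι} (hs : s.Nonempty) {f g : ι → α} {M : α}
    (h : ∀ i ∈ s, |f i - g i| ≤ M) : |s.sup' hs f - s.sup' hs g| ≤ M := by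
  have key : ∀ f g : ι → α, (∀ i ∈ s, |f i - g i| ≤ M) → s.sup' hs f - s.sup' hs g ≤ M :=
    fun f g h => sub_le_iff_le_add.2 <| sup'_le hs _ fun i hi =>
      calc f i ≤ M + g i := sub_le_iff_le_add.1 (abs_le.1 (h i hi)).2
        _ ≤ M + s.sup' hs g := by gcongr; exact le_sup' g hi
  exact abs_sub_le_iff.2 ⟨key f g h, key g f fun i hi => abs_sub_comm (g i) (f i) ▸ h i hi⟩

theorem Finset.abs_sum_mul_le_of_sum_eq_one {ι : Type*} {s : Finset ι} {p g : ι → ℝ} {M : ℝ}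
    (hp0 : ∀ i ∈ s, 0 ≤ p i) (hp1 : ∑ i ∈ s, p i = 1) (hg : ∀ i ∈ s, |g i| ≤ M) :
    |∑ i ∈ s, p i * g i| ≤ M :=
  calc |∑ i ∈ s, p i * g i| ≤ ∑ i ∈ s, p i * |g i| := by
        refine (abs_sum_le_sum_abs _ _).trans_eq (sum_congr rfl fun i hi => ?_)
        rw [abs_mul, abs_of_nonneg (hp0 i hi)]
    _ ≤ ∑ i ∈ s, p i * M := sum_le_sum fun i hi => mul_le_mul_of_nonneg_left (hg i hi) (hp0 i hi)
    _ = M := by rw [← sum_mul, hp1, one_mul]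

section GreedyBellman

variable {X A : Type*} [Fintype X] {F : Set (X → A)} [Fintype F] [Nonempty F]

/-- The operator `T` of the theorem is `greedyBellman P r γ ∘ N`. -/
noncomputable def greedyBellman (P : X → A → X → ℝ) (r : X → A → X → ℝ) (γ : ℝ)
    (q : X × F → ℝ) : X × F → ℝ := fun p =>
  ∑ y, P p.1 (p.2.1 p.1) y *
    (r p.1 (p.2.1 p.1) y + γ * univ.sup' univ_nonempty fun D : F => q (y, D))

theorem lipschitzWith_greedyBellman {P : X → A → X → ℝ} (hP0 : ∀ x a y, 0 ≤ P x a y)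
    (hP1 : ∀ x a, ∑ y, P x a y = 1) (r : X → A → X → ℝ) {γ : ℝ} (hγ : 0 ≤ γ) :
    LipschitzWith γ.toNNReal (greedyBellman (F := F) P r γ) := by
  refine LipschitzWith.of_dist_le' fun q₁ q₂ => (dist_pi_le_iff (by positivity)).2 fun p => ?_
  have hsup : ∀ y, |(univ.sup' univ_nonempty fun D : F => q₁ (y, D)) -
      univ.sup' univ_nonempty fun D : F => q₂ (y, D)| ≤ dist q₁ q₂ := fun y =>
    abs_sup'_sub_sup'_le_s4 _ fun D _ => by
      simpa only [Real.dist_eq] using dist_le_pi_dist q₁ q₂ (y, D)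
  rw [Real.dist_eq, greedyBellman, greedyBellman, ← sum_sub_distrib]
  simp_rw [← mul_sub, add_sub_add_left_eq_sub, ← mul_sub]
  refine abs_sum_mul_le_of_sum_eq_one (fun y _ => hP0 _ _ y) (hP1 _ _) fun y _ => ?_
  rw [abs_mul, abs_of_nonneg hγ]
  exact mul_le_mul_of_nonneg_left (hsup y) hγ

end GreedyBellman

theorem stmt4_general {X A : Type*} [Fintype X]
    (F : Set (X → A)) [Fintype F] [Nonempty F]
    (P : X → A → X → ℝ) (hP0 : ∀ x a y, 0 ≤ P x a y) (hP1 : ∀ x a, ∑ y, P x a y = 1)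
    (r : X → A → X → ℝ) (γ : ℝ) (hγ0 : 0 < γ) (hγ1 : γ < 1)
    (N : (X × F → ℝ) → (X × F → ℝ))
    (hN : ∀ q₁ q₂ : X × F → ℝ, ‖N q₁ - N q₂‖ ≤ ‖q₁ - q₂‖) :
    ∃! qstar : X × F → ℝ, ∀ (x : X) (C : F), qstar (x, C) =
      ∑ y, P x (C.1 x) y *
        (r x (C.1 x) y + γ * (univ.sup' univ_nonempty fun D : F => N qstar (y, D))) := by
  have hN' : LipschitzWith 1 N :=
    LipschitzWith.of_dist_le_mul fun q₁ q₂ => by simpa [dist_eq_norm] using hN q₁ q₂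
  have hT : ContractingWith γ.toNNReal (greedyBellman P r γ ∘ N) :=
    ⟨by simpa using hγ1, by simpa using (lipschitzWith_greedyBellman hP0 hP1 r hγ0.le).comp hN'⟩
  have hfix : ∀ q, Function.IsFixedPt (greedyBellman P r γ ∘ N) q ↔ ∀ (x : X) (C : F),
      q (x, C) = ∑ y, P x (C.1 x) y *
        (r x (C.1 x) y + γ * (univ.sup' univ_nonempty fun D : F => N q (y, D))) := fun q =>
    funext_iff.trans <| Prod.forall.trans <| forall_congr' fun _ => forall_congr' fun _ => eq_comm
  exact ⟨_, (hfix _).1 hT.fixedPoint_isFixedPt, fun q hq => hT.fixedPoint_unique ((hfix q).2 hq)⟩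

/-- If the neighborhood operator `N` is nonexpansive in the sup norm, then there
exists a unique Q-function `q*` satisfying the fixed-point equation
`q*(x,C) = Σ_y P x (C x) y * (r x (C x) y + γ * max_D (N q*)(y,D))` for all `x, C`;
i.e., the operator `T` has a unique fixed point. -/
theorem stmt4 {X A : Type*} [Fintype X] [Nonempty X] [Fintype A] [Nonempty A]
    (F : Set (X → A)) [Fintype F] [Nonempty F]
    (P : X → A → X → ℝ) (hP0 : ∀ x a y, 0 ≤ P x a y) (hP1 : ∀ x a, ∑ y, P x a y = 1)
    (r : X → A → X → ℝ) (γ : ℝ) (hγ0 : 0 < γ) (hγ1 : γ < 1)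
    (N : (X × F → ℝ) → (X × F → ℝ))
    (hN : ∀ q₁ q₂ : X × F → ℝ, ‖N q₁ - N q₂‖ ≤ ‖q₁ - q₂‖) :
    ∃! qstar : X × F → ℝ, ∀ (x : X) (C : F), qstar (x, C) =
      ∑ y, P x (C.1 x) y *
        (r x (C.1 x) y + γ * (univ.sup' univ_nonempty fun D : F => N qstar (y, D))) :=
  stmt4_general F P hP0 hP1 r γ hγ0 hγ1 N hN
end

section
/- Let N be the identity operator on Q-functions (corresponding to ν(x) = {x}), let q* be the unique fixed point of T, and define V*(x) = max_{C∈F} q*(x,C). Assume the family F is sufficiently rich: for every function v : X → ℝ there exists C ∈ F such that for all x ∈ X, Σ_{y∈X} P x (C x) y · ( r x (C x) y + γ · v(y) ) = max_{a∈A} Σ_{y∈X} P x a y · ( r x a y + γ · v(y) ). Then V* satisfies the classical Bellman optimality equation of the MDP: for every x ∈ X, V*(x) = max_{a∈A} Σ_{y∈X} P x a y · ( r x a y + γ · V*(y) ); hence V* is the optimal value function of the MDP. -/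
open Finset

/-! With `N` the identity, the fixed-point equation says that `q*(x, C)` is the one-step lookahead
of `V*` at the action `C x`. Hence `V*(x)` is the maximum of that lookahead over the actions
`{C x | C ∈ F}`, which is at most the maximum over all actions, and richness of `F` applied to
`v = V*` provides a policy attaining the latter. -/

theorem Finset.sup'_comp_eq_sup'_of_exists {ι α β : Type*} [SemilatticeSup β]
    (s : Finset ι) (t : Finset α) (hs : s.Nonempty) (ht : t.Nonempty) (g : ι → α) (f : α → β)
    (hg : ∀ i ∈ s, g i ∈ t) (hattain : ∃ i ∈ s, f (g i) = t.sup' ht f) :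
    s.sup' hs (f ∘ g) = t.sup' ht f := by
  obtain ⟨i, hi, hfi⟩ := hattain
  refine le_antisymm (sup'_le _ _ fun j hj => le_sup' f (hg j hj)) ?_
  exact hfi ▸ le_sup' (f ∘ g) hi

theorem stmt7_general {X A : Type*} [Fintype X] [Fintype A] [Nonempty A]
    (F : Set (X → A)) [Fintype F] [Nonempty F]
    (P : X → A → X → ℝ)
    (r : X → A → X → ℝ) (γ : ℝ)
    (qstar : X × F → ℝ)
    (hfix : ∀ (x : X) (C : F), qstar (x, C) =
      ∑ y, P x (C.1 x) y *
        (r x (C.1 x) y + γ * (univ.sup' univ_nonempty fun D : F => qstar (y, D))))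
    (Vstar : X → ℝ)
    (hV : ∀ x, Vstar x = univ.sup' univ_nonempty fun C : F => qstar (x, C))
    (hrich : ∀ v : X → ℝ, ∃ C : F, ∀ x,
      ∑ y, P x (C.1 x) y * (r x (C.1 x) y + γ * v y) =
        univ.sup' univ_nonempty fun a : A => ∑ y, P x a y * (r x a y + γ * v y)) :
    ∀ x, Vstar x = univ.sup' univ_nonempty fun a : A =>
      ∑ y, P x a y * (r x a y + γ * Vstar y) := by
  intro x
  set lookahead : A → ℝ := fun a => ∑ y, P x a y * (r x a y + γ * Vstar y)
  have hq : ∀ C : F, qstar (x, C) = lookahead (C.1 x) := fun C => by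
    simp only [hfix x C, lookahead, ← hV]
  obtain ⟨C, hC⟩ := hrich Vstar
  rw [hV x, funext hq]
  exact sup'_comp_eq_sup'_of_exists _ _ _ _ (fun C : F => C.1 x) lookahead
    (fun _ _ => mem_univ _) ⟨C, mem_univ C, hC x⟩

/-- With `N` the identity operator, `q*` the fixed point of `T`, and
`V*(x) = max_{C ∈ F} q*(x,C)`, if the family `F` is sufficiently rich (for every `v : X → ℝ`
some `C ∈ F` achieves the maximum over actions of the one-step lookahead at every state), then
`V*` satisfies the classical Bellman optimality equation of the MDP:
`V*(x) = max_{a ∈ A} Σ_y P x a y * (r x a y + γ * V*(y))`. -/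
theorem stmt7 {X A : Type*} [Fintype X] [Nonempty X] [Fintype A] [Nonempty A]
    (F : Set (X → A)) [Fintype F] [Nonempty F]
    (P : X → A → X → ℝ) (hP0 : ∀ x a y, 0 ≤ P x a y) (hP1 : ∀ x a, ∑ y, P x a y = 1)
    (r : X → A → X → ℝ) (γ : ℝ) (hγ0 : 0 < γ) (hγ1 : γ < 1)
    (qstar : X × F → ℝ)
    (hfix : ∀ (x : X) (C : F), qstar (x, C) =
      ∑ y, P x (C.1 x) y *
        (r x (C.1 x) y + γ * (univ.sup' univ_nonempty fun D : F => qstar (y, D))))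
    (Vstar : X → ℝ)
    (hV : ∀ x, Vstar x = univ.sup' univ_nonempty fun C : F => qstar (x, C))
    (hrich : ∀ v : X → ℝ, ∃ C : F, ∀ x,
      ∑ y, P x (C.1 x) y * (r x (C.1 x) y + γ * v y) =
        univ.sup' univ_nonempty fun a : A => ∑ y, P x a y * (r x a y + γ * v y)) :
    ∀ x, Vstar x = univ.sup' univ_nonempty fun a : A =>
      ∑ y, P x a y * (r x a y + γ * Vstar y) :=
  stmt7_general F P r γ qstar hfix Vstar hV hrich
end

section
/- Let N be the maximum neighborhood operator, (N q)(x,C) = max_{z∈ν(x)} q(z,C), let q* be the unique fixed point of T, and define V*(x) = max_{C∈F} max_{z∈ν(x)} q*(z,C). Then V* is a supersolution of the Bellman equation over the policy family F: for every x ∈ X, V*(x) ≥ max_{C∈F} Σ_{y∈X} P x (C x) y · ( r x (C x) y + γ · V*(y) ). -/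
open Finset

/-! With the maximum neighborhood operator, `max_D (N q*)(y, D)` is `V*(y)` itself, so the
fixed-point equation for `q*` says that the Bellman backup of `V*` along a policy `C` at `x` is
exactly `q*(x, C)`. Since `x ∈ ν(x)`, this is at most `max_{z ∈ ν(x)} q*(z, C) ≤ V*(x)`. -/

theorem Finset.le_sup'_sup' {ι κ α : Type*} [SemilatticeSup α] {s : Finset ι}
    {t : ι → Finset κ} (hs : s.Nonempty) (ht : ∀ i, (t i).Nonempty) (f : ι → κ → α)
    {i : ι} {k : κ} (hi : i ∈ s) (hk : k ∈ t i) :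
    f i k ≤ s.sup' hs fun i => (t i).sup' (ht i) (f i) :=
  le_sup'_of_le _ hi (le_sup' (f i) hk)

theorem stmt8_general {X A : Type*} [Fintype X]
    (F : Set (X → A)) [Fintype F] [Nonempty F]
    (P : X → A → X → ℝ)
    (r : X → A → X → ℝ) (γ : ℝ)
    (ν : X → Finset X) (hν : ∀ x, (ν x).Nonempty) (hxν : ∀ x, x ∈ ν x)
    (N : (X × F → ℝ) → (X × F → ℝ))
    (hN : ∀ (q : X × F → ℝ) (x : X) (C : F),
      N q (x, C) = (ν x).sup' (hν x) (fun z => q (z, C)))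
    (qstar : X × F → ℝ)
    (hfix : ∀ (x : X) (C : F), qstar (x, C) =
      ∑ y, P x (C.1 x) y *
        (r x (C.1 x) y + γ * (univ.sup' univ_nonempty fun D : F => N qstar (y, D))))
    (Vstar : X → ℝ)
    (hV : ∀ x, Vstar x = univ.sup' univ_nonempty fun C : F =>
      (ν x).sup' (hν x) fun z => qstar (z, C)) :
    ∀ x, (univ.sup' univ_nonempty fun C : F =>
      ∑ y, P x (C.1 x) y * (r x (C.1 x) y + γ * Vstar y)) ≤ Vstar x := by
  have hNV : ∀ y, (univ.sup' univ_nonempty fun D : F => N qstar (y, D)) = Vstar y := fun y => by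
    rw [hV]
    exact sup'_congr _ rfl fun D _ => hN qstar y D
  intro x
  refine sup'_le _ _ fun C _ => ?_
  calc ∑ y, P x (C.1 x) y * (r x (C.1 x) y + γ * Vstar y) = qstar (x, C) := by
        simp only [hfix, hNV]
    _ ≤ Vstar x := hV x ▸ le_sup'_sup' _ _ (fun C z => qstar (z, C)) (mem_univ C) (hxν x)

/-- With `N` the maximum neighborhood operator, `q*` the fixed point of `T`, and
`V*(x) = max_{C ∈ F} max_{z ∈ ν(x)} q*(z,C)`, the function `V*` is a supersolution of the
Bellman equation over the policy family `F`:
`V*(x) ≥ max_{C ∈ F} Σ_y P x (C x) y * (r x (C x) y + γ * V*(y))`. -/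
theorem stmt8 {X A : Type*} [Fintype X] [Nonempty X] [Fintype A] [Nonempty A]
    (F : Set (X → A)) [Fintype F] [Nonempty F]
    (P : X → A → X → ℝ) (hP0 : ∀ x a y, 0 ≤ P x a y) (hP1 : ∀ x a, ∑ y, P x a y = 1)
    (r : X → A → X → ℝ) (γ : ℝ) (hγ0 : 0 < γ) (hγ1 : γ < 1)
    (ν : X → Finset X) (hν : ∀ x, (ν x).Nonempty) (hxν : ∀ x, x ∈ ν x)
    (N : (X × F → ℝ) → (X × F → ℝ))
    (hN : ∀ (q : X × F → ℝ) (x : X) (C : F),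
      N q (x, C) = (ν x).sup' (hν x) (fun z => q (z, C)))
    (qstar : X × F → ℝ)
    (hfix : ∀ (x : X) (C : F), qstar (x, C) =
      ∑ y, P x (C.1 x) y *
        (r x (C.1 x) y + γ * (univ.sup' univ_nonempty fun D : F => N qstar (y, D))))
    (Vstar : X → ℝ)
    (hV : ∀ x, Vstar x = univ.sup' univ_nonempty fun C : F =>
      (ν x).sup' (hν x) fun z => qstar (z, C)) :
    ∀ x, (univ.sup' univ_nonempty fun C : F =>
      ∑ y, P x (C.1 x) y * (r x (C.1 x) y + γ * Vstar y)) ≤ Vstar x :=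
  stmt8_general F P r γ ν hν hxν N hN qstar hfix Vstar hV
end

section
/- Let N be the maximum neighborhood operator, (N q)(x,C) = max_{z∈ν(x)} q(z,C), let q* be the unique fixed point of T, and define V*(x) = max_{C∈F} max_{z∈ν(x)} q*(z,C). Let v_F : X → ℝ be the fixed point of the Bellman operator over F, i.e., v_F(x) = max_{C∈F} Σ_{y∈X} P x (C x) y · ( r x (C x) y + γ · v_F(y) ) for all x. Then V*(x) ≥ v_F(x) for all x ∈ X; that is, V* is an upper bound on the optimal value function of the MDP over the policy family F. -/
/-!
Since `x ∈ ν x`, the maximum neighborhood operator dominates the identity, so `q*(x, C) ≤ V*(x)`;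
and `max_D (N q*)(y, D) = V*(y)`, so the fixed-point equation of `T` says that every one-policy
backup of `V*` is some `q*(x, C)`. Hence `V*` is a supersolution of the Bellman operator `B` over
`F`, while `v_F = B v_F`. As `B` is monotone and shifts constants by the factor `γ < 1`, the
maximal excess `M = max (v_F - V*)` satisfies `M ≤ γ M`, so `M ≤ 0`.
-/

open Finset

namespace MDP

variable {X A : Type*} [Fintype X]

noncomputable def bellman (F : Set (X → A)) [Fintype F] [Nonempty F] (P r : X → A → X → ℝ)
    (γ : ℝ) (v : X → ℝ) (x : X) : ℝ :=
  univ.sup' univ_nonempty fun C : F => ∑ y, P x (C.1 x) y * (r x (C.1 x) y + γ * v y)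

lemma sum_mul_le_sum_mul_add {p f g : X → ℝ} {c : ℝ} (hp0 : ∀ y, 0 ≤ p y)
    (hp1 : ∑ y, p y = 1) (h : ∀ y, f y ≤ g y + c) :
    ∑ y, p y * f y ≤ ∑ y, p y * g y + c :=
  calc ∑ y, p y * f y ≤ ∑ y, p y * (g y + c) :=
        sum_le_sum fun y _ => mul_le_mul_of_nonneg_left (h y) (hp0 y)
    _ = ∑ y, p y * g y + c := by simp only [mul_add, sum_add_distrib, ← sum_mul, hp1, one_mul]

variable {F : Set (X → A)} [Fintype F] [Nonempty F] {P r : X → A → X → ℝ} {γ : ℝ}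

lemma bellman_le_bellman_add (hP0 : ∀ x a y, 0 ≤ P x a y) (hP1 : ∀ x a, ∑ y, P x a y = 1)
    (hγ : 0 ≤ γ) {v w : X → ℝ} {c : ℝ} (h : ∀ y, v y ≤ w y + c) (x : X) :
    bellman F P r γ v x ≤ bellman F P r γ w x + γ * c := by
  refine sup'_le _ _ fun C _ => ?_
  calc ∑ y, P x (C.1 x) y * (r x (C.1 x) y + γ * v y)
      ≤ ∑ y, P x (C.1 x) y * (r x (C.1 x) y + γ * w y) + γ * c :=
        sum_mul_le_sum_mul_add (hP0 x _) (hP1 x _) fun y => by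
          nlinarith [mul_le_mul_of_nonneg_left (h y) hγ]
    _ ≤ bellman F P r γ w x + γ * c :=
        add_le_add_left (le_sup' (fun C : F =>
          ∑ y, P x (C.1 x) y * (r x (C.1 x) y + γ * w y)) (mem_univ C)) _

lemma le_of_le_bellman_of_bellman_le (hP0 : ∀ x a y, 0 ≤ P x a y)
    (hP1 : ∀ x a, ∑ y, P x a y = 1) (hγ0 : 0 ≤ γ) (hγ1 : γ < 1) {v w : X → ℝ}
    (hv : ∀ x, v x ≤ bellman F P r γ v x) (hw : ∀ x, bellman F P r γ w x ≤ w x) (x : X) :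
    v x ≤ w x := by
  have : Nonempty X := ⟨x⟩
  set M := (univ : Finset X).sup' univ_nonempty fun y => v y - w y
  have hM : ∀ y, v y ≤ w y + M := fun y => by
    linarith [le_sup' (fun y => v y - w y) (mem_univ y)]
  have hMγ : M ≤ γ * M := sup'_le _ _ fun y _ => by
    linarith [hv y, bellman_le_bellman_add (F := F) (r := r) hP0 hP1 hγ0 hM y, hw y]
  have hM0 : M ≤ 0 := by nlinarith
  linarith [hM x]

end MDP

theorem stmt10_general {X A : Type*} [Fintype X]
    (F : Set (X → A)) [Fintype F] [Nonempty F]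
    (P : X → A → X → ℝ) (hP0 : ∀ x a y, 0 ≤ P x a y) (hP1 : ∀ x a, ∑ y, P x a y = 1)
    (r : X → A → X → ℝ) (γ : ℝ) (hγ0 : 0 < γ) (hγ1 : γ < 1)
    (ν : X → Finset X) (hν : ∀ x, (ν x).Nonempty) (hxν : ∀ x, x ∈ ν x)
    (N : (X × F → ℝ) → (X × F → ℝ))
    (hN : ∀ (q : X × F → ℝ) (x : X) (C : F),
      N q (x, C) = (ν x).sup' (hν x) (fun z => q (z, C)))
    (qstar : X × F → ℝ)
    (hfix : ∀ (x : X) (C : F), qstar (x, C) =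
      ∑ y, P x (C.1 x) y *
        (r x (C.1 x) y + γ * (univ.sup' univ_nonempty fun D : F => N qstar (y, D))))
    (Vstar : X → ℝ)
    (hV : ∀ x, Vstar x = univ.sup' univ_nonempty fun C : F =>
      (ν x).sup' (hν x) fun z => qstar (z, C))
    (vF : X → ℝ)
    (hvF : ∀ x, vF x = univ.sup' univ_nonempty fun C : F =>
      ∑ y, P x (C.1 x) y * (r x (C.1 x) y + γ * vF y)) :
    ∀ x, vF x ≤ Vstar x := by
  have hNV : ∀ y, (univ.sup' univ_nonempty fun D : F => N qstar (y, D)) = Vstar y := fun y => by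
    rw [hV]
    exact sup'_congr _ rfl fun D _ => hN qstar y D
  have hqV : ∀ x (C : F), qstar (x, C) ≤ Vstar x := fun x C => by
    rw [hV]
    exact (le_sup' (fun z => qstar (z, C)) (hxν x)).trans
      (le_sup' (fun C : F => (ν x).sup' (hν x) fun z => qstar (z, C)) (mem_univ C))
  have hVsuper : ∀ x, MDP.bellman F P r γ Vstar x ≤ Vstar x := fun x =>
    sup'_le _ _ fun C _ => by
      have hq := hfix x C
      simp only [hNV] at hq
      exact hq ▸ hqV x C
  exact MDP.le_of_le_bellman_of_bellman_le hP0 hP1 hγ0.le hγ1 (fun x => (hvF x).le) hVsuper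

/-- With `N` the maximum neighborhood operator, `q*` the unique fixed point of
`T`, and `V*(x) = max_{C ∈ F} max_{z ∈ ν(x)} q*(z,C)`, if `v_F` is the fixed point of the
Bellman operator over `F`, then `V*(x) ≥ v_F(x)` for all `x`; i.e. `V*` is an upper bound on
the optimal value function of the MDP over the policy family `F`. -/
theorem stmt10 {X A : Type*} [Fintype X] [Nonempty X] [Fintype A] [Nonempty A]
    (F : Set (X → A)) [Fintype F] [Nonempty F]
    (P : X → A → X → ℝ) (hP0 : ∀ x a y, 0 ≤ P x a y) (hP1 : ∀ x a, ∑ y, P x a y = 1)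
    (r : X → A → X → ℝ) (γ : ℝ) (hγ0 : 0 < γ) (hγ1 : γ < 1)
    (ν : X → Finset X) (hν : ∀ x, (ν x).Nonempty) (hxν : ∀ x, x ∈ ν x)
    (N : (X × F → ℝ) → (X × F → ℝ))
    (hN : ∀ (q : X × F → ℝ) (x : X) (C : F),
      N q (x, C) = (ν x).sup' (hν x) (fun z => q (z, C)))
    (qstar : X × F → ℝ)
    (hfix : ∀ (x : X) (C : F), qstar (x, C) =
      ∑ y, P x (C.1 x) y *
        (r x (C.1 x) y + γ * (univ.sup' univ_nonempty fun D : F => N qstar (y, D))))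
    (Vstar : X → ℝ)
    (hV : ∀ x, Vstar x = univ.sup' univ_nonempty fun C : F =>
      (ν x).sup' (hν x) fun z => qstar (z, C))
    (vF : X → ℝ)
    (hvF : ∀ x, vF x = univ.sup' univ_nonempty fun C : F =>
      ∑ y, P x (C.1 x) y * (r x (C.1 x) y + γ * vF y)) :
    ∀ x, vF x ≤ Vstar x :=
  stmt10_general F P hP0 hP1 r γ hγ0 hγ1 ν hν hxν N hN qstar hfix Vstar hV vF hvF
end

section
/- Let p : X → Fin M be a surjective map partitioning X into M nonempty regions Ω_i = {z ∈ X : p z = i}, and let ζ : X → ℝ satisfy ζ z ≥ 0 for all z and Σ_{z : p z = i} ζ z = 1 for every i. For C ∈ F define P̄ C i j = Σ_{z : p z = i} Σ_{y : p y = j} ζ z · P z (C z) y and r̄ i C j = ( Σ_{z : p z = i} Σ_{y : p y = j} ζ z · P z (C z) y · r z (C z) y ) / (P̄ C i j) (with the convention that division by zero yields zero). Then for every function V : Fin M → ℝ, every C ∈ F, and every i: Σ_{z : p z = i} ζ z · Σ_{y∈X} P z (C z) y · ( r z (C z) y + γ · V(p y) ) = Σ_{j} P̄ C i j · ( r̄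 i C j + γ · V j ). Consequently, V satisfies the aggregated optimality equation V i = max_{C∈F} Σ_{z : p z = i} ζ z · Σ_{y∈X} P z (C z) y · ( r z (C z) y + γ · V(p y) ) for all i if and only if V satisfies the Bellman equation V i = max_{C∈F} Σ_{j} P̄ C i j · ( r̄ i C j + γ · V j ) of the aggregated MDP with states Fin M, actions F, transition probabilities P̄ and rewards r̄. -/
open Finset

/-!
Split the sum over successor states `y` according to the region `p y = j`. On the block
`Ω_i × Ω_j` the term `γ V(p y) = γ V j` is constant, so it contributes `γ V j · P̄ C i j`, while
the reward part contributes exactly the numerator of `r̄ i C j`, which equals `P̄ C i j · r̄ i C j`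
even when `P̄ C i j = 0`, because the weights `ζ z P z (C z) y` are nonnegative. Hence the two
one-step lookaheads agree policy by policy, and so do their maxima over `F`.
-/

lemma sum_mul_div_sum_of_nonneg {ι K : Type*} [Field K] [LinearOrder K] [IsStrictOrderedRing K]
    {s : Finset ι} {w : ι → K} (f : ι → K) (hw : ∀ i ∈ s, 0 ≤ w i) :
    (∑ i ∈ s, w i) * ((∑ i ∈ s, w i * f i) / ∑ i ∈ s, w i) = ∑ i ∈ s, w i * f i := by
  by_cases h : ∑ i ∈ s, w i = 0
  · have hzero : ∀ i ∈ s, w i = 0 := (sum_eq_zero_iff_of_nonneg hw).mp h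
    rw [h, zero_mul, eq_comm]
    exact sum_eq_zero fun i hi => by rw [hzero i hi, zero_mul]
  · exact mul_div_cancel₀ _ h

lemma sum_eq_sum_fiberwise_apply {X ι M : Type*} [Fintype X] [Fintype ι] [DecidableEq ι]
    [AddCommMonoid M] (p : X → ι) (f : X → ι → M) :
    ∑ y, f y (p y) = ∑ j, ∑ y with p y = j, f y j := by
  rw [← sum_fiberwise univ p]
  refine sum_congr rfl fun j _ => sum_congr rfl fun y hy => ?_
  rw [(mem_filter.mp hy).2]

section Aggregation

variable {X ι : Type*} [Fintype X] [DecidableEq ι]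
  (p : X → ι) (ζ : X → ℝ) (Q R : X → X → ℝ)

/-- With `Q z y = P z (C z) y` and `R z y = r z (C z) y` these are `P̄ C` and `r̄ · C ·`. -/
def aggregatedKernel (i j : ι) : ℝ :=
  ∑ z with p z = i, ∑ y with p y = j, ζ z * Q z y

noncomputable def aggregatedReward (i j : ι) : ℝ :=
  (∑ z with p z = i, ∑ y with p y = j, ζ z * Q z y * R z y) / aggregatedKernel p ζ Q i j

variable {p ζ Q}

lemma aggregatedKernel_mul_aggregatedReward (hζ : ∀ z, 0 ≤ ζ z) (hQ : ∀ z y, 0 ≤ Q z y)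
    (i j : ι) :
    aggregatedKernel p ζ Q i j * aggregatedReward p ζ Q R i j =
      ∑ z with p z = i, ∑ y with p y = j, ζ z * Q z y * R z y := by
  simp only [aggregatedReward, aggregatedKernel, ← sum_product']
  exact sum_mul_div_sum_of_nonneg (fun zy : X × X => R zy.1 zy.2)
    fun zy _ => mul_nonneg (hζ zy.1) (hQ zy.1 zy.2)

lemma sum_mul_lookahead_eq_aggregated [Fintype ι] (hζ : ∀ z, 0 ≤ ζ z) (hQ : ∀ z y, 0 ≤ Q z y)
    (γ : ℝ) (V : ι → ℝ) (i : ι) :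
    ∑ z with p z = i, ζ z * ∑ y, Q z y * (R z y + γ * V (p y)) =
      ∑ j, aggregatedKernel p ζ Q i j * (aggregatedReward p ζ Q R i j + γ * V j) := by
  calc ∑ z with p z = i, ζ z * ∑ y, Q z y * (R z y + γ * V (p y))
      = ∑ j, ∑ z with p z = i, ∑ y with p y = j, ζ z * (Q z y * (R z y + γ * V j)) := by
        rw [sum_comm]
        refine sum_congr rfl fun z _ => ?_
        rw [sum_eq_sum_fiberwise_apply p (fun y j => Q z y * (R z y + γ * V j)), mul_sum]
        simp only [mul_sum]
    _ = ∑ j, aggregatedKernel p ζ Q i j * (aggregatedReward p ζ Q R i j + γ * V j) := by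
        refine sum_congr rfl fun j _ => ?_
        rw [mul_add, aggregatedKernel_mul_aggregatedReward R hζ hQ, aggregatedKernel]
        simp only [sum_mul, ← sum_add_distrib]
        exact sum_congr rfl fun z _ => sum_congr rfl fun y _ => by ring

end Aggregation

theorem stmt12_general {X A : Type*} [Fintype X]
    (F : Set (X → A)) [Fintype F] [Nonempty F]
    (P : X → A → X → ℝ) (hP0 : ∀ x a y, 0 ≤ P x a y)
    (r : X → A → X → ℝ) (γ : ℝ)
    (M : ℕ) (p : X → Fin M)
    (ζ : X → ℝ) (hζ0 : ∀ z, 0 ≤ ζ z)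
    (Pbar : F → Fin M → Fin M → ℝ)
    (hPbar : ∀ (C : F) (i j : Fin M), Pbar C i j =
      ∑ z ∈ univ.filter (fun z => p z = i),
        ∑ y ∈ univ.filter (fun y => p y = j), ζ z * P z (C.1 z) y)
    (rbar : Fin M → F → Fin M → ℝ)
    (hrbar : ∀ (i : Fin M) (C : F) (j : Fin M), rbar i C j =
      (∑ z ∈ univ.filter (fun z => p z = i),
        ∑ y ∈ univ.filter (fun y => p y = j),
          ζ z * P z (C.1 z) y * r z (C.1 z) y) / Pbar C i j) :
    (∀ (V : Fin M → ℝ) (C : F) (i : Fin M),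
      ∑ z ∈ univ.filter (fun z => p z = i),
        ζ z * ∑ y, P z (C.1 z) y * (r z (C.1 z) y + γ * V (p y)) =
      ∑ j, Pbar C i j * (rbar i C j + γ * V j)) ∧
    (∀ V : Fin M → ℝ,
      (∀ i : Fin M, V i = univ.sup' univ_nonempty fun C : F =>
        ∑ z ∈ univ.filter (fun z => p z = i),
          ζ z * ∑ y, P z (C.1 z) y * (r z (C.1 z) y + γ * V (p y))) ↔
      (∀ i : Fin M, V i = univ.sup' univ_nonempty fun C : F =>
        ∑ j, Pbar C i j * (rbar i C j + γ * V j))) := by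
  have lookahead_eq : ∀ (V : Fin M → ℝ) (C : F) (i : Fin M),
      ∑ z ∈ univ.filter (fun z => p z = i),
        ζ z * ∑ y, P z (C.1 z) y * (r z (C.1 z) y + γ * V (p y)) =
      ∑ j, Pbar C i j * (rbar i C j + γ * V j) := by
    intro V C i
    simp only [hrbar, hPbar]
    exact sum_mul_lookahead_eq_aggregated (Q := fun z y => P z (C.1 z) y)
      (fun z y => r z (C.1 z) y) hζ0 (fun z y => hP0 _ _ _) γ V i
  exact ⟨lookahead_eq, fun V => by simp only [lookahead_eq]⟩

/-- With the aggregated kernel `P̄` and aggregated rewards `r̄` (defined with the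
convention that division by zero yields zero), for every `V : Fin M → ℝ`, `C ∈ F` and region
`i`, the ζ-averaged one-step lookahead equals the aggregated one-step lookahead; consequently
`V` satisfies the aggregated optimality equation iff it satisfies the Bellman equation of the
aggregated MDP with states `Fin M`, actions `F`, transitions `P̄` and rewards `r̄`. -/
theorem stmt12 {X A : Type*} [Fintype X] [Nonempty X] [Fintype A] [Nonempty A]
    (F : Set (X → A)) [Fintype F] [Nonempty F]
    (P : X → A → X → ℝ) (hP0 : ∀ x a y, 0 ≤ P x a y) (hP1 : ∀ x a, ∑ y, P x a y = 1)
    (r : X → A → X → ℝ) (γ : ℝ) (hγ0 : 0 < γ) (hγ1 : γ < 1)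
    (M : ℕ) (hM : 0 < M) (p : X → Fin M) (hp : Function.Surjective p)
    (ζ : X → ℝ) (hζ0 : ∀ z, 0 ≤ ζ z)
    (hζ1 : ∀ i : Fin M, ∑ z ∈ univ.filter (fun z => p z = i), ζ z = 1)
    (Pbar : F → Fin M → Fin M → ℝ)
    (hPbar : ∀ (C : F) (i j : Fin M), Pbar C i j =
      ∑ z ∈ univ.filter (fun z => p z = i),
        ∑ y ∈ univ.filter (fun y => p y = j), ζ z * P z (C.1 z) y)
    (rbar : Fin M → F → Fin M → ℝ)
    (hrbar : ∀ (i : Fin M) (C : F) (j : Fin M), rbar i C j =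
      (∑ z ∈ univ.filter (fun z => p z = i),
        ∑ y ∈ univ.filter (fun y => p y = j),
          ζ z * P z (C.1 z) y * r z (C.1 z) y) / Pbar C i j) :
    (∀ (V : Fin M → ℝ) (C : F) (i : Fin M),
      ∑ z ∈ univ.filter (fun z => p z = i),
        ζ z * ∑ y, P z (C.1 z) y * (r z (C.1 z) y + γ * V (p y)) =
      ∑ j, Pbar C i j * (rbar i C j + γ * V j)) ∧
    (∀ V : Fin M → ℝ,
      (∀ i : Fin M, V i = univ.sup' univ_nonempty fun C : F =>
        ∑ z ∈ univ.filter (fun z => p z = i),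
          ζ z * ∑ y, P z (C.1 z) y * (r z (C.1 z) y + γ * V (p y))) ↔
      (∀ i : Fin M, V i = univ.sup' univ_nonempty fun C : F =>
        ∑ j, Pbar C i j * (rbar i C j + γ * V j))) :=
  stmt12_general F P hP0 r γ M p ζ hζ0 Pbar hPbar rbar hrbar
end

section
/- Let N be the maximum neighborhood operator, (N q)(x,C) = max_{z∈ν(x)} q(z,C), let q* be the unique fixed point of T, and define V*(x) = max_{C∈F} max_{z∈ν(x)} q*(z,C). Then V* satisfies, for every x ∈ X: V*(x) = max_{C∈F} max_{z∈ν(x)} Σ_{y∈X} P z (C z) y · ( r z (C z) y + γ · V*(y) ). -/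
open Finset

theorem stmt17_general {X A : Type*} [Fintype X]
    (F : Set (X → A)) [Fintype F] [Nonempty F]
    (P : X → A → X → ℝ)
    (r : X → A → X → ℝ) (γ : ℝ)
    (ν : X → Finset X) (hν : ∀ x, (ν x).Nonempty)
    (N : (X × F → ℝ) → (X × F → ℝ))
    (hN : ∀ (q : X × F → ℝ) (x : X) (C : F),
      N q (x, C) = (ν x).sup' (hν x) (fun z => q (z, C)))
    (qstar : X × F → ℝ)
    (hfix : ∀ (x : X) (C : F), qstar (x, C) =
      ∑ y, P x (C.1 x) y *
        (r x (C.1 x) y + γ * (univ.sup' univ_nonempty fun D : F => N qstar (y, D))))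
    (Vstar : X → ℝ)
    (hV : ∀ x, Vstar x = univ.sup' univ_nonempty fun C : F =>
      (ν x).sup' (hν x) fun z => qstar (z, C)) :
    ∀ x, Vstar x = univ.sup' univ_nonempty fun C : F =>
      (ν x).sup' (hν x) fun z =>
        ∑ y, P z (C.1 z) y * (r z (C.1 z) y + γ * Vstar y) := by
  have max_N_eq_Vstar : ∀ y, (univ.sup' univ_nonempty fun D : F => N qstar (y, D)) = Vstar y :=
    fun y => (hV y).symm ▸ sup'_congr _ rfl fun D _ => hN qstar y D
  intro x
  rw [hV x]
  refine sup'_congr _ rfl fun C _ => sup'_congr _ rfl fun z _ => ?_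
  simp only [hfix z C, max_N_eq_Vstar]

/-- With `N` the maximum neighborhood operator, `q*` the unique fixed point of
`T`, and `V*(x) = max_{C ∈ F} max_{z ∈ ν(x)} q*(z,C)`, the function `V*` satisfies
`V*(x) = max_{C ∈ F} max_{z ∈ ν(x)} Σ_y P z (C z) y * (r z (C z) y + γ * V*(y))`. -/
theorem stmt17 {X A : Type*} [Fintype X] [Nonempty X] [Fintype A] [Nonempty A]
    (F : Set (X → A)) [Fintype F] [Nonempty F]
    (P : X → A → X → ℝ) (hP0 : ∀ x a y, 0 ≤ P x a y) (hP1 : ∀ x a, ∑ y, P x a y = 1)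
    (r : X → A → X → ℝ) (γ : ℝ) (hγ0 : 0 < γ) (hγ1 : γ < 1)
    (ν : X → Finset X) (hν : ∀ x, (ν x).Nonempty) (hxν : ∀ x, x ∈ ν x)
    (N : (X × F → ℝ) → (X × F → ℝ))
    (hN : ∀ (q : X × F → ℝ) (x : X) (C : F),
      N q (x, C) = (ν x).sup' (hν x) (fun z => q (z, C)))
    (qstar : X × F → ℝ)
    (hfix : ∀ (x : X) (C : F), qstar (x, C) =
      ∑ y, P x (C.1 x) y *
        (r x (C.1 x) y + γ * (univ.sup' univ_nonempty fun D : F => N qstar (y, D))))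
    (Vstar : X → ℝ)
    (hV : ∀ x, Vstar x = univ.sup' univ_nonempty fun C : F =>
      (ν x).sup' (hν x) fun z => qstar (z, C)) :
    ∀ x, Vstar x = univ.sup' univ_nonempty fun C : F =>
      (ν x).sup' (hν x) fun z =>
        ∑ y, P z (C.1 z) y * (r z (C.1 z) y + γ * Vstar y) :=
  stmt17_general F P r γ ν hν N hN qstar hfix Vstar hV
end
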